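/- arXiv:gr-qc/0210061 — 2 statements merged into one kernel-verified Lean document; each statement's English description precedes it below -/
import Mathlib

section
/- A countable past-finite partial order a is rogue if and only if a has a level containing infinitely many non-maximal elements. (Corollary: Θ = Γ.) -/
/-- A poset (given by its order relation `le`) is *past-finite* if the past
`{y | y ≤ x}` of every element `x` is finite. -/
def PastFinite {α : Type} (le : α → α → Prop) : Prop := ∀ x : α, {y : α | le y x}.Finite

/-- The finite poset `s` on `Fin n` *is a stem in* the poset `(α, le)`: there is an
order-embedding of `s` into `(α, le)` whose image is a down-closed (lower) set. -/
def IsStemIn {α : Type} {n : ℕ} (s : Fin n → Fin n → Prop) (le : α → α → Prop) : Prop :=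
  ∃ f : Fin n → α, Function.Injective f ∧ (∀ i j, s i j ↔ le (f i) (f j)) ∧
    ∀ (x : α) (j : Fin n), le x (f j) → ∃ i, f i = x

/-- Two posets *have the same stems* if every finite poset is a stem in one iff it is a
stem in the other (every finite poset is isomorphic to one on some `Fin n`). -/
def SameStems {α β : Type} (le₁ : α → α → Prop) (le₂ : β → β → Prop) : Prop :=
  ∀ (n : ℕ) (s : Fin n → Fin n → Prop), IsStemIn s le₁ ↔ IsStemIn s le₂

/-- The posets `(α, le₁)` and `(β, le₂)` are order-isomorphic. -/
def OrderIsoRel {α β : Type} (le₁ : α → α → Prop) (le₂ : β → β → Prop) : Prop :=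
  ∃ e : α ≃ β, ∀ x y : α, le₁ x y ↔ le₂ (e x) (e y)

/-- Strict order relation associated to `le` (in a partial order). -/
def LtRel {α : Type} (le : α → α → Prop) (x y : α) : Prop := le x y ∧ x ≠ y

/-- `x` is maximal: no element lies strictly above it. -/
def IsMaximalRel {α : Type} (le : α → α → Prop) (x : α) : Prop := ∀ y, le x y → y = x

/-- There is a chain `x₀ < x₁ < ⋯ < x_k = x` (of length `k`) with top element `x`. -/
def ChainTo {α : Type} (le : α → α → Prop) (x : α) (k : ℕ) : Prop :=
  ∃ f : Fin (k + 1) → α, (∀ i j : Fin (k + 1), i < j → LtRel le (f i) (f j)) ∧ f (Fin.last k) = x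

/-- `x` has level `k`: `k` is the maximum length of a chain with top element `x`. -/
def HasLevel {α : Type} (le : α → α → Prop) (x : α) (k : ℕ) : Prop :=
  ChainTo le x k ∧ ∀ m, ChainTo le x m → m ≤ k

/-- A causet (countable past-finite partial order) is *rogue* if there exists a causet
not order-isomorphic to it having the same stems. -/
def IsRogueRel {α : Type} (le : α → α → Prop) : Prop :=
  ∃ (β : Type) (le' : β → β → Prop), IsPartialOrder β le' ∧ Countable β ∧ PastFinite le' ∧
    ¬ OrderIsoRel le le' ∧ SameStems le le'

/-!
If some level has infinitely many non-maximal elements, then on the lowest such level infinitely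
many non-maximal elements share one strict past: their strict pasts are subsets of the finite set
of non-maximal elements of lower level. Call a maximal element twinned if infinitely many
non-maximal elements share its strict past; isomorphisms preserve twinned maximal elements. In a
stem, a maximal element can be exchanged for any fresh element with the same strict past, so
deleting all twinned maximal elements, or (if there are none) adjoining a new maximal element
over the shared strict past, changes no stems, while it empties, resp. populates, the set of
twinned maximal elements.

Conversely, let every level have finitely many non-maximal elements and let `β` have the same
stems. Finite lower sets of either order embed as lower sets of the other, so the truncations
`nonmaxBelow n` have the same finite size. Embedding a truncation together with up to `n`
maximal elements over each of its subsets yields an isomorphism of truncations that does not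
decrease the numbers of maximal elements over the subsets, capped at `n`; composing it with such
an isomorphism in the other direction permutes the finitely many subsets, so the capped counts
agree. By König's lemma these isomorphisms can be chosen compatibly; their union is an
isomorphism of the non-maximal parts that matches all counts of maximal elements, and by
countability it extends over the maximal elements.
-/

open Set Order Function

universe u

namespace Order

variable {α β : Type*} [PartialOrder α] [PartialOrder β]

theorem height_lt_top_of_finite_Iic {x : α} (hx : (Iic x).Finite) : height x < ⊤ := by
  refine lt_of_le_of_lt (height_le fun p hp => ?_) hx.encard_lt_top
  have hsub : range p ⊆ Iic x := by
    rintro _ ⟨i, rfl⟩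
    exact hp ▸ p.strictMono.monotone (Fin.le_last i)
  calc (p.length : ℕ∞) ≤ p.length + 1 := le_self_add
    _ = (range p).encard := by simp [← image_univ, p.strictMono.injective.encard_image]
    _ ≤ (Iic x).encard := encard_le_encard hsub

theorem height_coe_of_isLowerSet {s : Set α} (hs : IsLowerSet s) (x : s) :
    height (x : α) = height x :=
  (height_eq_of_strictMono _ (Subtype.strictMono_coe _)
    (fun a b hb => ⟨⟨b, hs hb.le a.2⟩, hb, rfl⟩) x).symm

end Order

namespace OrderIso

variable {α β : Type*} [PartialOrder α] [PartialOrder β] {s : Set α} {t : Set β}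

def mapSet (ψ : s ≃o t) (E : Set α) : Set β := (fun x => (ψ x : β)) '' ((↑) ⁻¹' E)

variable (ψ : s ≃o t) {E : Set α}

theorem mapSet_subset : ψ.mapSet E ⊆ t := by
  rintro _ ⟨x, -, rfl⟩
  exact (ψ x).2

theorem mapSet_self : ψ.mapSet s = t := by
  refine (mapSet_subset ψ).antisymm fun b hb => ?_
  obtain ⟨x, hx⟩ := ψ.surjective ⟨b, hb⟩
  exact ⟨x, x.2, congrArg Subtype.val hx⟩

theorem encard_mapSet (hE : E ⊆ s) : (ψ.mapSet E).encard = E.encard := by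
  rw [mapSet, Injective.encard_image (f := fun x => (ψ x : β))
      (Subtype.val_injective.comp ψ.injective),
    encard_preimage_of_injective_subset_range Subtype.val_injective (by simpa using hE)]

theorem symm_mapSet_mapSet (hE : E ⊆ s) : ψ.symm.mapSet (ψ.mapSet E) = E := by
  ext a
  simp only [mapSet, mem_image, mem_preimage, Subtype.exists]
  constructor
  · rintro ⟨b, hb, ⟨x, hx, hxE, rfl⟩, rfl⟩
    simpa using hxE
  · intro ha
    exact ⟨_, (ψ ⟨a, hE ha⟩).2, ⟨a, hE ha, ha, rfl⟩, by simp⟩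

theorem Iio_apply (ht : IsLowerSet t) (x : s) : Iio (ψ x : β) = ψ.mapSet (Iio (x : α)) := by
  ext b
  constructor
  · intro hb
    refine ⟨ψ.symm ⟨b, ht hb.le (ψ x).2⟩, ?_, by simp⟩
    show ψ.symm ⟨b, _⟩ < x
    rw [← ψ.lt_iff_lt, apply_symm_apply]
    exact hb
  · rintro ⟨y, hy, rfl⟩
    exact ψ.lt_iff_lt.2 hy

theorem height_apply (hs : IsLowerSet s) (ht : IsLowerSet t) (x : s) :
    height (ψ x : β) = height (x : α) := by
  rw [height_coe_of_isLowerSet ht, height_orderIso, height_coe_of_isLowerSet hs]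

def restrict {s' : Set α} {t' : Set β} (hs : s' ⊆ s) (ht : t' ⊆ t)
    (h : ∀ x : s, (x : α) ∈ s' ↔ (ψ x : β) ∈ t') : s' ≃o t' where
  toFun x := ⟨ψ (inclusion hs x), (h _).1 x.2⟩
  invFun y := ⟨ψ.symm (inclusion ht y), (h _).2 (by simp)⟩
  left_inv x := by ext; simp
  right_inv y := by ext; simp
  map_rel_iff' {x y} := by
    change ψ (inclusion hs x) ≤ ψ (inclusion hs y) ↔ x ≤ y
    rw [ψ.le_iff_le]
    rfl

theorem mapSet_restrict {s' : Set α} {t' : Set β} (hs : s' ⊆ s) (ht : t' ⊆ t)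
    (h : ∀ x : s, (x : α) ∈ s' ↔ (ψ x : β) ∈ t') (hE : E ⊆ s') :
    (ψ.restrict hs ht h).mapSet E = ψ.mapSet E := by
  ext b
  constructor
  · rintro ⟨x, hx, rfl⟩
    exact ⟨inclusion hs x, hx, rfl⟩
  · rintro ⟨x, hx, rfl⟩
    exact ⟨⟨x, hE hx⟩, hx, rfl⟩

theorem exists_restrict_of_mapSet_subset (φ : s ≃o t) {s' : Set α} {t' : Set β} (hs : s' ⊆ s)
    (hs' : s'.Finite) (hmaps : φ.mapSet s' ⊆ t') (hcard : t'.encard ≤ s'.encard) :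
    ∃ ψ : s' ≃o t', ∀ E ⊆ s', ψ.mapSet E = φ.mapSet E := by
  have hfin : (φ.mapSet s').Finite := encard_lt_top_iff.1 (φ.encard_mapSet hs ▸ hs'.encard_lt_top)
  have himage : φ.mapSet s' = t' :=
    hfin.eq_of_subset_of_encard_le hmaps (by rwa [φ.encard_mapSet hs])
  have hmem : ∀ x : s, (x : α) ∈ s' ↔ (φ x : β) ∈ t' := fun x => by
    rw [← himage]
    refine ⟨fun hx => ⟨x, hx, rfl⟩, fun ⟨y, hy, hxy⟩ => ?_⟩
    rwa [← φ.injective (Subtype.ext hxy)]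
  exact ⟨φ.restrict hs (himage ▸ φ.mapSet_subset) hmem, fun E hE => φ.mapSet_restrict hs _ hmem hE⟩

end OrderIso

def Equiv.toOrderIsoOfImageIio {α β : Type*} [PartialOrder α] [PartialOrder β] (F : α ≃ β)
    (h : ∀ x, F '' Iio x = Iio (F x)) : α ≃o β where
  toEquiv := F
  map_rel_iff' {x y} := by
    rw [le_iff_lt_or_eq, le_iff_lt_or_eq (a := x), F.injective.eq_iff, ← mem_Iio, ← h,
      F.injective.mem_set_image, mem_Iio]

theorem Set.nonempty_equiv_of_encard_eq {α β : Type u} [Countable α] [Countable β] {s : Set α}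
    {t : Set β} (h : s.encard = t.encard) : Nonempty (s ≃ t) :=
  Cardinal.eq.1 <|
    (Cardinal.toENat_eq_iff_of_le_aleph0 Cardinal.mk_le_aleph0 Cardinal.mk_le_aleph0).1 h

/-- Every point of `s` is periodic under the injective self-map `σ` of the finite set `s`. -/
theorem Set.Finite.apply_eq_of_le_apply {ι M : Type*} [PartialOrder M] {s : Set ι}
    (hs : s.Finite) {σ : ι → ι} (hσ : MapsTo σ s s) (hinj : InjOn σ s) {c : ι → M}
    (hc : ∀ i ∈ s, c i ≤ c (σ i)) : ∀ i ∈ s, c (σ i) = c i := by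
  intro i hi
  have := hs.to_subtype
  obtain ⟨k, hk, hper⟩ := mem_periodicPts.1 ((hσ.restrict_inj.2 hinj).mem_periodicPts ⟨i, hi⟩)
  have hσk : σ^[k] i = i := by
    simpa [hσ.iterate_restrict] using congrArg Subtype.val hper
  have hchain : ∀ j, c (σ i) ≤ c (σ^[j + 1] i) := by
    intro j
    induction j with
    | zero => exact le_rfl
    | succ j ih =>
      rw [iterate_succ_apply']
      exact ih.trans (hc _ (hσ.iterate (j + 1) hi))
  obtain ⟨j, rfl⟩ := Nat.exists_eq_succ_of_ne_zero hk.ne'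
  exact le_antisymm ((hchain j).trans_eq (congrArg c hσk)) (hc i hi)

namespace Causet

section Bridge

variable {α β : Type}

abbrev partialOrderOfRel {le : α → α → Prop} (h : IsPartialOrder α le) : PartialOrder α where
  le := le
  le_refl := h.refl
  le_trans _ _ _ := h.trans _ _ _
  le_antisymm _ _ := h.antisymm _ _

variable [PartialOrder α] [PartialOrder β]

theorem isMaximalRel_iff {x : α} : IsMaximalRel (· ≤ ·) x ↔ IsMax x :=
  ⟨fun h _ hy => (h _ hy).le, fun h _ hy => le_antisymm (h hy) hy⟩

theorem chainTo_iff {x : α} {k : ℕ} : ChainTo (· ≤ ·) x k ↔ (k : ℕ∞) ≤ height x := by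
  constructor
  · rintro ⟨f, hf, rfl⟩
    exact length_le_height_last
      (p := LTSeries.mk k f fun i j hij => lt_iff_le_and_ne.2 (hf i j hij))
  · intro h
    obtain ⟨p, hlast, rfl⟩ := exists_series_of_le_height x h
    exact ⟨p, fun i j hij => lt_iff_le_and_ne.1 (p.strictMono hij), hlast⟩

theorem hasLevel_iff {x : α} {k : ℕ} : HasLevel (· ≤ ·) x k ↔ height x = k := by
  simp only [HasLevel, chainTo_iff]
  refine ⟨fun ⟨hk, hmax⟩ => ?_, fun h => ⟨h.ge, fun m hm => by exact_mod_cast h ▸ hm⟩⟩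
  cases h : height x with
  | top => simpa using hmax (k + 1) (by simp [h])
  | coe j =>
    rw [h] at hk
    exact_mod_cast le_antisymm (hmax j h.ge) (by exact_mod_cast hk)

theorem orderIsoRel_iff :
    OrderIsoRel (α := α) (β := β) (· ≤ ·) (· ≤ ·) ↔ Nonempty (α ≃o β) :=
  ⟨fun ⟨e, he⟩ => ⟨⟨e, (he _ _).symm⟩⟩, fun ⟨e⟩ => ⟨e.toEquiv, fun _ _ => e.le_iff_le.symm⟩⟩

end Bridge

/-! ### Stems -/

section StemMaps

variable {α : Type*} [PartialOrder α] {n : ℕ} {s : Fin n → Fin n → Prop}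

def IsStemMap (s : Fin n → Fin n → Prop) (f : Fin n → α) : Prop :=
  Injective f ∧ (∀ i j, s i j ↔ f i ≤ f j) ∧ ∀ x j, x ≤ f j → ∃ i, f i = x

theorem IsStemMap.update {f : Fin n → α} (hf : IsStemMap s f) {j : Fin n} (hj : IsMax (f j))
    {y : α} (hy : y ∉ range f) (hIio : Iio y = Iio (f j)) : IsStemMap s (update f j y) := by
  obtain ⟨hinj, hle, hlow⟩ := hf
  have hfy : ∀ i, f i ≠ y := fun i h => hy ⟨i, h⟩
  have hle_y : ∀ i ≠ j, f i ≤ y ↔ f i ≤ f j := fun i hi => by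
    rw [(hfy i).le_iff_lt, (hinj.ne hi).le_iff_lt]
    exact Set.ext_iff.1 hIio (f i)
  have hy_le : ∀ i, ¬ y ≤ f i := fun i h => by
    obtain ⟨k, rfl⟩ := hlow y i h
    exact hfy k rfl
  have hj_le : ∀ i ≠ j, ¬ f j ≤ f i := fun i hi h => hi (hinj (le_antisymm (hj h) h))
  refine ⟨?_, fun a b => ?_, fun x b hx => ?_⟩
  · intro a b hab
    rcases eq_or_ne j a with rfl | ha <;> rcases eq_or_ne j b with rfl | hb
    · rfl
    · rw [update_self, update_of_ne hb.symm] at hab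
      exact absurd hab.symm (hfy b)
    · rw [update_self, update_of_ne ha.symm] at hab
      exact absurd hab (hfy a)
    · rw [update_of_ne ha.symm, update_of_ne hb.symm] at hab
      exact hinj hab
  · rcases eq_or_ne j a with rfl | ha <;> rcases eq_or_ne j b with rfl | hb
    · simp [hle]
    · simp [update_of_ne hb.symm, hle, hy_le b, hj_le b hb.symm]
    · simp [update_of_ne ha.symm, hle, hle_y a ha.symm]
    · simp [update_of_ne ha.symm, update_of_ne hb.symm, hle]
  · rcases eq_or_ne j b with rfl | hb
    · rw [update_self] at hx
      rcases hx.eq_or_lt with rfl | hxy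
      · exact ⟨j, update_self ..⟩
      · have hxj : x < f j := by rwa [← mem_Iio, ← hIio]
        obtain ⟨i, rfl⟩ := hlow _ j hxj.le
        exact ⟨i, update_of_ne (fun h => hxj.ne (congrArg f h)) ..⟩
    · rw [update_of_ne hb.symm] at hx
      obtain ⟨i, rfl⟩ := hlow x b hx
      exact ⟨i, update_of_ne (by rintro rfl; exact hj_le b hb.symm hx) ..⟩

/-- Replace the elements outside `S` one at a time by fresh twins. -/
theorem IsStemMap.exists_range_subset {S : Set α}
    (hS : ∀ x ∉ S, IsMax x ∧ {y ∈ S | Iio y = Iio x}.Infinite) {f : Fin n → α}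
    (hf : IsStemMap s f) : ∃ f', IsStemMap s f' ∧ range f' ⊆ S := by
  classical
  suffices h : ∀ (J : Finset (Fin n)) (f : Fin n → α), IsStemMap s f → (∀ i ∉ J, f i ∈ S) →
      ∃ f', IsStemMap s f' ∧ range f' ⊆ S from h Finset.univ f hf (by simp)
  intro J
  induction J using Finset.induction_on with
  | empty => exact fun f hf hfS => ⟨f, hf, range_subset_iff.2 fun i => hfS i (by simp)⟩
  | insert j J _ ih =>
    intro f hf hfS
    by_cases hjS : f j ∈ S
    · refine ih f hf fun i hi => ?_
      rcases eq_or_ne i j with rfl | hij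
      · exact hjS
      · exact hfS i (by simp [hij, hi])
    · obtain ⟨hmax, htwins⟩ := hS _ hjS
      obtain ⟨y, ⟨hyS, hyIio⟩, hyf⟩ := (htwins.sdiff (finite_range f)).nonempty
      refine ih _ (hf.update hmax hyf hyIio) fun i hi => ?_
      rcases eq_or_ne i j with rfl | hij
      · simpa using hyS
      · rw [update_of_ne hij]
        exact hfS i (by simp [hij, hi])

end StemMaps

section Stems

variable {α β : Type} [PartialOrder α] [PartialOrder β]

theorem sameStems_of_orderEmbedding (ι : β ↪o α)
    (h : ∀ x ∉ range ι, IsMax x ∧ {y ∈ range ι | Iio y = Iio x}.Infinite) :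
    SameStems (α := β) (β := α) (· ≤ ·) (· ≤ ·) := by
  intro n s
  constructor
  · rintro ⟨f, hinj, hle, hlow⟩
    refine ⟨ι ∘ f, ι.injective.comp hinj, fun i j => (hle i j).trans ι.le_iff_le.symm,
      fun x j hx => ?_⟩
    by_cases hxι : x ∈ range ι
    · obtain ⟨b, rfl⟩ := hxι
      obtain ⟨i, rfl⟩ := hlow b j (ι.le_iff_le.1 hx)
      exact ⟨i, rfl⟩
    · exact ⟨j, le_antisymm ((h x hxι).1 hx) hx⟩
  · rintro ⟨f, hf⟩
    obtain ⟨f', ⟨hinj, hle, hlow⟩, hrange⟩ := IsStemMap.exists_range_subset h hf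
    choose g hg using fun i => hrange ⟨i, rfl⟩
    refine ⟨g, fun a b hab => hinj (by rw [← hg a, ← hg b, hab]),
      fun i j => by rw [hle, ← hg i, ← hg j, ι.le_iff_le], fun b j hb => ?_⟩
    obtain ⟨i, hi⟩ := hlow (ι b) j (hg j ▸ ι.le_iff_le.2 hb)
    exact ⟨i, ι.injective (by rw [hg, hi])⟩

theorem _root_.SameStems.symm (h : SameStems (α := α) (β := β) (· ≤ ·) (· ≤ ·)) :
    SameStems (α := β) (β := α) (· ≤ ·) (· ≤ ·) :=
  fun n s => (h n s).symm

theorem _root_.SameStems.exists_orderIso (h : SameStems (α := α) (β := β) (· ≤ ·) (· ≤ ·))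
    {W : Set α} (hW : W.Finite) (hWl : IsLowerSet W) :
    ∃ t : Set β, IsLowerSet t ∧ Nonempty (W ≃o t) := by
  have := hW.fintype
  let e := Fintype.equivFin W
  obtain ⟨f, -, hle, hlow⟩ := (h _ fun i j => (e.symm i : α) ≤ e.symm j).1
    ⟨fun i => e.symm i, Subtype.val_injective.comp e.symm.injective, fun _ _ => Iff.rfl,
      fun x j hx => ⟨e ⟨x, hWl hx (e.symm j).2⟩, by simp⟩⟩
  let g : W ↪o β := .ofMapLEIff (f ∘ e) fun x y => by simp [← hle]
  refine ⟨range g, ?_, ⟨g.orderIso⟩⟩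
  rintro _ b hb ⟨x, rfl⟩
  obtain ⟨i, rfl⟩ := hlow b (e x) hb
  exact ⟨e.symm i, by simp [g]⟩

end Stems

/-! ### Twinned maximal elements and the rogue constructions -/

section Twins

variable {α β : Type*} [PartialOrder α] [PartialOrder β]

def nonmaxTwins (x : α) : Set α := {y | ¬IsMax y ∧ Iio y = Iio x}

/-- The order invariant that tells the posets constructed below apart from `α`. -/
def twinnedMaximals (α : Type*) [PartialOrder α] : Set α :=
  {m | IsMax m ∧ (nonmaxTwins m).Infinite}

theorem apply_mem_twinnedMaximals (e : α ≃o β) {m : α} (hm : m ∈ twinnedMaximals α) :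
    e m ∈ twinnedMaximals β := by
  refine ⟨e.isMax_apply.2 hm.1, (hm.2.image e.injective.injOn).mono ?_⟩
  rintro _ ⟨y, ⟨hy, hyIio⟩, rfl⟩
  exact ⟨e.isMax_apply.not.2 hy, by rw [← e.image_Iio, ← e.image_Iio, hyIio]⟩

theorem isEmpty_orderIso_of_twinnedMaximals (hα : (twinnedMaximals α).Nonempty)
    (hβ : twinnedMaximals β = ∅) : IsEmpty (α ≃o β) := by
  refine ⟨fun e => ?_⟩
  obtain ⟨m, hm⟩ := hα
  simpa [hβ] using apply_mem_twinnedMaximals e hm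

def nonmaxBelow (α : Type*) [PartialOrder α] (n : ℕ) : Set α := {x | ¬IsMax x ∧ height x < n}

theorem Iio_subset_nonmaxBelow {x : α} {n : ℕ} (hx : height x ≤ n) : Iio x ⊆ nonmaxBelow α n :=
  fun _ hy => ⟨not_isMax_of_lt hy, height_le_coe_iff.1 hx _ hy⟩

theorem nonmaxBelow_finite {n : ℕ} (h : ∀ k < n, {x : α | height x = k ∧ ¬IsMax x}.Finite) :
    (nonmaxBelow α n).Finite := by
  refine ((finite_lt_nat n).biUnion fun k hk => h k hk).subset fun x ⟨hx, hxn⟩ => ?_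
  obtain ⟨k, hk⟩ := ENat.ne_top_iff_exists.1 (hxn.trans_le le_top).ne
  exact mem_biUnion (show k < n by exact_mod_cast hk ▸ hxn) ⟨hk.symm, hx⟩

theorem exists_infinite_nonmaxTwins
    (h : ∃ k : ℕ, {x : α | height x = k ∧ ¬IsMax x}.Infinite) :
    ∃ x : α, (nonmaxTwins x).Infinite := by
  classical
  have hF : (nonmaxBelow α (Nat.find h)).Finite :=
    nonmaxBelow_finite fun j hj => not_infinite.1 (Nat.find_min h hj)
  by_contra! hfin
  have hfibre : ∀ E : Set α, {y : α | ¬IsMax y ∧ Iio y = E}.Finite := fun E => by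
    rcases eq_empty_or_nonempty {y : α | ¬IsMax y ∧ Iio y = E} with hE | ⟨x, -, rfl⟩
    · rw [hE]
      exact finite_empty
    · exact hfin x
  refine Nat.find_spec h ((hF.finite_subsets.biUnion fun E _ => hfibre E).subset ?_)
  rintro x ⟨hxk, hx⟩
  exact mem_biUnion (Iio_subset_nonmaxBelow hxk.le) ⟨hx, rfl⟩

end Twins

section RogueConstructions

theorem isRogueRel_of_sameStems {α : Type} [PartialOrder α] (β : Type) [PartialOrder β]
    [Countable β] (hβ : ∀ x : β, (Iic x).Finite) (hiso : IsEmpty (α ≃o β))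
    (hss : SameStems (α := α) (β := β) (· ≤ ·) (· ≤ ·)) : IsRogueRel (α := α) (· ≤ ·) :=
  ⟨β, (· ≤ ·), inferInstance, ‹_›, hβ, fun h => hiso.false (orderIsoRel_iff.1 h).some, hss⟩

variable {α : Type} [PartialOrder α]

theorem twinnedMaximals_compl_eq_empty :
    twinnedMaximals ((twinnedMaximals α)ᶜ : Set α) = ∅ := by
  set S := (twinnedMaximals α)ᶜ
  have hS : ∀ y : α, ¬IsMax y → y ∈ S := fun y hy hm => hy hm.1
  have hIio : ∀ v : S, (↑) '' Iio v = Iio (v : α) := fun v => by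
    ext y
    refine ⟨fun ⟨w, hw, hwy⟩ => hwy ▸ hw, fun hy => ⟨⟨y, hS y (not_isMax_of_lt hy)⟩, hy, rfl⟩⟩
  refine eq_empty_of_forall_notMem fun v ⟨hvmax, hvtwins⟩ => v.2 ⟨fun z hvz => ?_, ?_⟩
  · by_cases hzS : z ∈ S
    · exact hvmax (show v ≤ ⟨z, hzS⟩ from hvz)
    -- `z` has a non-maximal twin `y`, which lies in `S`
    obtain ⟨y, hy, hyIio⟩ := (not_not.1 hzS).2.nonempty
    rcases hvz.eq_or_lt with h | hvz
    · exact h.ge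
    have hvy : (v : α) < y := by rw [← mem_Iio, hyIio]; exact hvz
    exact absurd (hvmax (show v ≤ ⟨y, hS y hy⟩ from hvy.le)) hvy.not_ge
  · refine (hvtwins.image Subtype.val_injective.injOn).mono ?_
    rintro _ ⟨w, ⟨hw, hwIio⟩, rfl⟩
    exact ⟨fun hmax => hw fun u hu => hmax hu, by rw [← hIio, ← hIio, hwIio]⟩

theorem isRogueRel_of_twinnedMaximals_nonempty [Countable α] (hα : ∀ x : α, (Iic x).Finite)
    (hM : (twinnedMaximals α).Nonempty) : IsRogueRel (α := α) (· ≤ ·) := by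
  refine isRogueRel_of_sameStems ((twinnedMaximals α)ᶜ : Set α)
    (fun v => (hα v).preimage Subtype.val_injective.injOn)
    (isEmpty_orderIso_of_twinnedMaximals hM twinnedMaximals_compl_eq_empty)
    (SameStems.symm (sameStems_of_orderEmbedding
      (OrderEmbedding.subtype fun x => x ∈ (twinnedMaximals α)ᶜ) fun x hx => ?_))
  rw [OrderEmbedding.coe_subtype, Subtype.range_coe, notMem_compl_iff] at hx
  rw [OrderEmbedding.coe_subtype, Subtype.range_coe]
  exact ⟨hx.1, hx.2.mono fun y (hy : y ∈ nonmaxTwins x) =>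
    ⟨fun hm : y ∈ twinnedMaximals α => hy.1 hm.1, hy.2⟩⟩

/-- `α` with one new maximal element, `none`, whose strict past is `Iio _x₀`. -/
def WithMaxTwin (_x₀ : α) : Type := Option α

namespace WithMaxTwin

variable {x₀ : α}

instance : PartialOrder (WithMaxTwin x₀) where
  le a b := match a, b with
    | some a, some b => a ≤ b
    | some a, none => a < x₀
    | none, some _ => False
    | none, none => True
  le_refl a := by cases a <;> trivial
  le_trans := by
    rintro (_ | a) (_ | b) (_ | c) hab hbc <;>
      first | trivial | exact hab.elim | exact hbc.elim | exact le_trans hab hbc |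
        exact lt_of_le_of_lt hab hbc
  le_antisymm := by
    rintro (_ | a) (_ | b) hab hba <;>
      first | rfl | exact hab.elim | exact hba.elim | exact congrArg some (le_antisymm hab hba)

instance [Countable α] : Countable (WithMaxTwin x₀) := inferInstanceAs (Countable (Option α))

def new : WithMaxTwin x₀ := none

def embed : α ↪o WithMaxTwin x₀ := .ofMapLEIff some fun _ _ => Iff.rfl

theorem eq_new_of_notMem_range {y : WithMaxTwin x₀} (hy : y ∉ range embed) : y = new := by
  cases y with
  | none => rfl
  | some a => exact absurd ⟨a, rfl⟩ hy

theorem isMax_new : IsMax (new : WithMaxTwin x₀) := by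
  rintro (_ | b) h
  · exact le_rfl
  · exact h.elim

theorem Iio_embed (a : α) : Iio (embed a : WithMaxTwin x₀) = embed '' Iio a := by
  ext (_ | b)
  · exact ⟨fun h => h.1.elim, fun ⟨_, _, h⟩ => (Option.some_ne_none _ h).elim⟩
  · exact ⟨fun h => ⟨b, (embed (x₀ := x₀)).lt_iff_lt.1 h, rfl⟩,
      fun ⟨c, hc, h⟩ => h ▸ (embed (x₀ := x₀)).lt_iff_lt.2 hc⟩

theorem Iio_new : Iio (new : WithMaxTwin x₀) = embed '' Iio x₀ := by
  ext (_ | b)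
  · exact ⟨fun h => (h.2 h.1).elim, fun ⟨_, _, h⟩ => (Option.some_ne_none _ h).elim⟩
  · exact ⟨fun h => ⟨b, h.1, rfl⟩, fun ⟨c, hc, h⟩ => h ▸ ⟨hc, id⟩⟩

theorem finite_Iic (hα : ∀ x : α, (Iic x).Finite) (y : WithMaxTwin x₀) : (Iic y).Finite := by
  rw [← Iio_insert]
  refine Finite.insert _ ?_
  cases y with
  | none => exact Iio_new (x₀ := x₀) ▸ ((hα x₀).subset Iio_subset_Iic_self).image _
  | some a => exact Iio_embed (x₀ := x₀) a ▸ ((hα a).subset Iio_subset_Iic_self).image _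

theorem image_embed_nonmaxTwins_subset :
    embed '' nonmaxTwins x₀ ⊆ nonmaxTwins (new : WithMaxTwin x₀) := by
  rintro _ ⟨b, ⟨hb, hbIio⟩, rfl⟩
  obtain ⟨c, hbc⟩ := not_isMax_iff.1 hb
  exact ⟨not_isMax_of_lt ((embed (x₀ := x₀)).lt_iff_lt.2 hbc), by rw [Iio_embed, Iio_new, hbIio]⟩

end WithMaxTwin

open WithMaxTwin in
theorem isRogueRel_of_twinnedMaximals_eq_empty [Countable α] (hα : ∀ x : α, (Iic x).Finite)
    (hM : twinnedMaximals α = ∅) {x₀ : α} (hx₀ : (nonmaxTwins x₀).Infinite) :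
    IsRogueRel (α := α) (· ≤ ·) := by
  have himage := image_embed_nonmaxTwins_subset (x₀ := x₀)
  have hnew : (new : WithMaxTwin x₀) ∈ twinnedMaximals _ :=
    ⟨isMax_new, (hx₀.image embed.injective.injOn).mono himage⟩
  refine isRogueRel_of_sameStems (WithMaxTwin x₀) (finite_Iic hα)
    ⟨fun e => (isEmpty_orderIso_of_twinnedMaximals ⟨_, hnew⟩ hM).false e.symm⟩
    (sameStems_of_orderEmbedding embed fun y hy => ?_)
  obtain rfl := eq_new_of_notMem_range hy
  refine ⟨isMax_new, (hx₀.image embed.injective.injOn).mono ?_⟩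
  rintro _ ⟨b, hb, rfl⟩
  exact ⟨⟨b, rfl⟩, (himage ⟨b, hb, rfl⟩).2⟩

end RogueConstructions

/-! ### Rigidity -/

section Truncations

variable {α β : Type*} [PartialOrder α] [PartialOrder β]

def maxWithPast (E : Set α) : Set α := {m | IsMax m ∧ Iio m = E}

theorem isLowerSet_nonmaxBelow (n : ℕ) : IsLowerSet (nonmaxBelow α n) :=
  fun _ _ hyx ⟨hx, hxn⟩ => ⟨fun hy => hx (hy.mono hyx), (height_mono hyx).trans_lt hxn⟩

theorem nonmaxBelow_mono {m n : ℕ} (h : m ≤ n) : nonmaxBelow α m ⊆ nonmaxBelow α n :=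
  fun _ ⟨hx, hxm⟩ => ⟨hx, hxm.trans_le (by exact_mod_cast h)⟩

theorem mem_nonmaxBelow_iff_apply {j : ℕ} (ψ : nonmaxBelow α j ≃o nonmaxBelow β j)
    (x : nonmaxBelow α j) (i : ℕ) : (x : α) ∈ nonmaxBelow α i ↔ (ψ x : β) ∈ nonmaxBelow β i := by
  change (¬IsMax (x : α) ∧ height (x : α) < i) ↔ (¬IsMax (ψ x : β) ∧ height (ψ x : β) < i)
  rw [ψ.height_apply (isLowerSet_nonmaxBelow j) (isLowerSet_nonmaxBelow j)]
  exact and_congr_left fun _ => iff_of_true x.2.1 (ψ x).2.1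

theorem mapSet_nonmaxBelow_subset {i j : ℕ} (ψ : nonmaxBelow α j ≃o nonmaxBelow β j) {E : Set α}
    (hE : E ⊆ nonmaxBelow α i) : ψ.mapSet E ⊆ nonmaxBelow β i := by
  rintro _ ⟨x, hx, rfl⟩
  exact (mem_nonmaxBelow_iff_apply ψ x i).1 (hE hx)

def truncate {i j : ℕ} (ψ : nonmaxBelow α j ≃o nonmaxBelow β j) (h : i ≤ j) :
    nonmaxBelow α i ≃o nonmaxBelow β i :=
  ψ.restrict (nonmaxBelow_mono h) (nonmaxBelow_mono h) fun x => mem_nonmaxBelow_iff_apply ψ x i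

theorem exists_finite_isLowerSet_witnesses (hα : ∀ x : α, (Iic x).Finite) {S T : Set α}
    (hS : S.Finite) (hSn : S ⊆ {x | ¬IsMax x}) (hT : T.Finite) :
    ∃ W : Set α, W.Finite ∧ IsLowerSet W ∧ S ∪ T ⊆ W ∧ ∀ x ∈ S, ∃ w ∈ W, x < w := by
  choose! w hw using fun x (hx : x ∈ S) => not_isMax_iff.1 (hSn hx)
  have hfin : (lowerClosure (S ∪ T ∪ w '' S) : Set α).Finite := by
    rw [coe_lowerClosure]
    exact ((hS.union hT).union (hS.image w)).biUnion fun x _ => hα x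
  exact ⟨_, hfin, (lowerClosure _).lower, fun x hx => subset_lowerClosure (Or.inl hx),
    fun x hx => ⟨w x, subset_lowerClosure (Or.inr ⟨x, hx, rfl⟩), hw x hx⟩⟩

theorem mapSet_subset_nonmaxBelow {W : Set α} {t : Set β} (φ : W ≃o t) (hW : IsLowerSet W)
    (ht : IsLowerSet t) {S : Set α} {n : ℕ} (hS : S ⊆ nonmaxBelow α n)
    (hSW : ∀ x ∈ S, ∃ w ∈ W, x < w) : φ.mapSet S ⊆ nonmaxBelow β n := by
  rintro _ ⟨x, hx, rfl⟩
  obtain ⟨w, hw, hxw⟩ := hSW x hx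
  exact ⟨not_isMax_of_lt (φ.lt_iff_lt.2 (show x < ⟨w, hw⟩ from hxw)),
    (φ.height_apply hW ht x).trans_lt (hS hx).2⟩

theorem isMax_apply_of_subset_mapSet {W : Set α} {t : Set β} (φ : W ≃o t) (hW : IsLowerSet W)
    (ht : IsLowerSet t) {k : ℕ} (hk : nonmaxBelow β k ⊆ φ.mapSet (nonmaxBelow α k)) {m : W}
    (hm : IsMax (m : α)) (hmk : height (m : α) < k) : IsMax (φ m : β) := by
  by_contra hφm
  obtain ⟨x, hx, hxm⟩ := hk ⟨hφm, (φ.height_apply hW ht m).trans_lt hmk⟩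
  exact (φ.injective (Subtype.ext hxm) ▸ hx).1 hm

/-- The counts are capped at `n` so that finitely many maximal elements witness them inside one
finite stem. -/
def MatchesMaximals (n : ℕ) (ψ : nonmaxBelow α (n + 1) ≃o nonmaxBelow β (n + 1)) : Prop :=
  ∀ E ⊆ nonmaxBelow α n,
    min (n : ℕ∞) (maxWithPast E).encard = min (n : ℕ∞) (maxWithPast (ψ.mapSet E)).encard

theorem MatchesMaximals.truncate {i j : ℕ} {ψ : nonmaxBelow α (j + 1) ≃o nonmaxBelow β (j + 1)}
    (hψ : MatchesMaximals j ψ) (h : i ≤ j) :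
    MatchesMaximals i (Causet.truncate ψ (Nat.add_le_add_right h 1)) := by
  intro E hE
  have hcast : (i : ℕ∞) ≤ j := by exact_mod_cast h
  rw [Causet.truncate,
    OrderIso.mapSet_restrict _ _ _ _ (hE.trans (nonmaxBelow_mono (Nat.le_succ i))),
    ← min_eq_left hcast, min_assoc, min_assoc, hψ E (hE.trans (nonmaxBelow_mono h))]

theorem exists_compatible_matchesMaximals (hA : ∀ n, (nonmaxBelow α n).Finite)
    (hB : ∀ n, (nonmaxBelow β n).Finite)
    (h : ∀ n, ∃ ψ : nonmaxBelow α (n + 1) ≃o nonmaxBelow β (n + 1), MatchesMaximals n ψ) :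
    ∃ Φ : ∀ n, nonmaxBelow α (n + 1) ≃o nonmaxBelow β (n + 1), (∀ n, MatchesMaximals n (Φ n)) ∧
      ∀ i j (hij : i ≤ j), truncate (Φ j) (Nat.add_le_add_right hij 1) = Φ i := by
  have hfin : ∀ n, Finite (nonmaxBelow α n ≃o nonmaxBelow β n) := fun n =>
    have := (hA n).to_subtype
    have := (hB n).to_subtype
    Finite.of_injective _ DFunLike.coe_injective
  have : ∀ n,
      Nonempty {ψ : nonmaxBelow α (n + 1) ≃o nonmaxBelow β (n + 1) // MatchesMaximals n ψ} :=
    fun n => nonempty_subtype.2 (h n)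
  obtain ⟨Φ, hΦ⟩ := exists_seq_forall_proj_of_forall_finite
    (α := fun n => {ψ : nonmaxBelow α (n + 1) ≃o nonmaxBelow β (n + 1) // MatchesMaximals n ψ})
    (fun hij ψ => ⟨truncate ψ.1 _, ψ.2.truncate hij⟩) (fun _ _ => rfl) (fun _ _ _ _ _ _ => rfl)
    fun _ _ => toFinite _
  exact ⟨fun n => (Φ n).1, fun n => (Φ n).2, fun i j hij => congrArg Subtype.val (hΦ hij)⟩

theorem isLowerSet_setOf_not_isMax : IsLowerSet {x : α | ¬IsMax x} :=
  fun _ _ hba ha hb => ha (hb.mono hba)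

theorem exists_mem_nonmaxBelow (hα : ∀ x : α, (Iic x).Finite) {x : α} (hx : ¬IsMax x) :
    ∃ n, x ∈ nonmaxBelow α (n + 1) := by
  refine ⟨(height x).toNat, hx, ?_⟩
  rw [← ENat.natCast_toNat (height_lt_top_of_finite_Iic (hα x)).ne]
  exact_mod_cast Nat.lt_succ_self _

theorem exists_subset_nonmaxBelow (hα : ∀ x : α, (Iic x).Finite) {E : Set α} (hE : E.Finite)
    (hEn : E ⊆ {x | ¬IsMax x}) : ∃ n, E ⊆ nonmaxBelow α n := by
  choose! N hN using fun x (hx : x ∈ E) => exists_mem_nonmaxBelow hα (hEn hx)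
  obtain ⟨n, hn⟩ := (hE.image N).bddAbove
  exact ⟨n + 1, fun x hx => nonmaxBelow_mono (Nat.add_le_add_right (hn ⟨x, hx, rfl⟩) 1) (hN x hx)⟩

theorem maxWithPast_eq_empty (hα : ∀ x : α, (Iic x).Finite) {E : Set α} (hE : E.Infinite) :
    maxWithPast E = ∅ :=
  eq_empty_of_forall_notMem fun m ⟨_, hm⟩ => hE (hm ▸ (hα m).subset Iio_subset_Iic_self)

theorem exists_orderIso_nonmax (hα : ∀ x : α, (Iic x).Finite) (hβ : ∀ x : β, (Iic x).Finite)
    (Φ : ∀ n, nonmaxBelow α (n + 1) ≃o nonmaxBelow β (n + 1))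
    (hΦ : ∀ i j (hij : i ≤ j), truncate (Φ j) (Nat.add_le_add_right hij 1) = Φ i) :
    ∃ e : {x : α | ¬IsMax x} ≃o {y : β | ¬IsMax y},
      ∀ n, ∀ E ⊆ nonmaxBelow α (n + 1), e.mapSet E = (Φ n).mapSet E := by
  have hcompat : ∀ i j (x : α) (hi : x ∈ nonmaxBelow α (i + 1)) (hj : x ∈ nonmaxBelow α (j + 1)),
      (Φ i ⟨x, hi⟩ : β) = Φ j ⟨x, hj⟩ := by
    intro i j x hi hj
    wlog hij : i ≤ j generalizing i j
    · exact (this j i hj hi (le_of_not_ge hij)).symm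
    rw [← hΦ i j hij]
    rfl
  choose N hN using fun x : {x : α | ¬IsMax x} => exists_mem_nonmaxBelow hα x.2
  let f (x : {x : α | ¬IsMax x}) : {y : β | ¬IsMax y} := ⟨Φ (N x) ⟨x, hN x⟩, (Φ _ _).2.1⟩
  have hf : ∀ n (x : {x : α | ¬IsMax x}) (hx : (x : α) ∈ nonmaxBelow α (n + 1)),
      (f x : β) = Φ n ⟨x, hx⟩ :=
    fun n x hx => hcompat _ _ _ _ _
  have hle : ∀ x y, f x ≤ f y ↔ x ≤ y := fun x y => by
    have hx := nonmaxBelow_mono (Nat.add_le_add_right (le_max_left (N x) (N y)) 1) (hN x)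
    have hy := nonmaxBelow_mono (Nat.add_le_add_right (le_max_right (N x) (N y)) 1) (hN y)
    change (f x : β) ≤ f y ↔ (x : α) ≤ y
    rw [hf _ x hx, hf _ y hy]
    exact (Φ _).le_iff_le
  have hsurj : Surjective f := fun y => by
    obtain ⟨n, hn⟩ := exists_mem_nonmaxBelow hβ y.2
    set x := (Φ n).symm ⟨y, hn⟩
    exact ⟨⟨x, x.2.1⟩, Subtype.ext ((hf n _ x.2).trans (by simp [x]))⟩
  refine ⟨RelIso.ofSurjective (OrderEmbedding.ofMapLEIff f hle) hsurj, fun n E hE => ?_⟩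
  ext b
  constructor
  · rintro ⟨x, hxE, rfl⟩
    exact ⟨⟨x, hE hxE⟩, hxE, (hf n x (hE hxE)).symm⟩
  · rintro ⟨x, hxE, rfl⟩
    exact ⟨⟨x, x.2.1⟩, hxE, hf n _ x.2⟩

theorem encard_maxWithPast_mapSet (hα : ∀ x : α, (Iic x).Finite) (hβ : ∀ x : β, (Iic x).Finite)
    {Φ : ∀ n, nonmaxBelow α (n + 1) ≃o nonmaxBelow β (n + 1)} (hΦ : ∀ n, MatchesMaximals n (Φ n))
    {e : {x : α | ¬IsMax x} ≃o {y : β | ¬IsMax y}}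
    (he : ∀ n, ∀ E ⊆ nonmaxBelow α (n + 1), e.mapSet E = (Φ n).mapSet E)
    {E : Set α} (hE : E ⊆ {x | ¬IsMax x}) :
    (maxWithPast E).encard = (maxWithPast (e.mapSet E)).encard := by
  by_cases hEfin : E.Finite
  · obtain ⟨N, hN⟩ := exists_subset_nonmaxBelow hα hEfin hE
    refine ENat.eq_of_forall_natCast_le_iff fun k => ?_
    have hEn : E ⊆ nonmaxBelow α (max N k) := hN.trans (nonmaxBelow_mono (le_max_left N k))
    have hkn : (k : ℕ∞) ≤ (max N k : ℕ) := by exact_mod_cast le_max_right N k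
    have hcount := hΦ _ E hEn
    rw [← he _ E (hEn.trans (nonmaxBelow_mono (max N k).le_succ))] at hcount
    have hcap : ∀ a : ℕ∞, (k : ℕ∞) ≤ a ↔ (k : ℕ∞) ≤ min ((max N k : ℕ) : ℕ∞) a := fun a => by
      rw [le_min_iff, and_iff_right hkn]
    rw [hcap, hcount, ← hcap]
  · have hEinf : (e.mapSet E).Infinite := by
      rw [← encard_eq_top_iff, e.encard_mapSet hE, encard_eq_top_iff]
      exact hEfin
    rw [maxWithPast_eq_empty hα hEfin, maxWithPast_eq_empty hβ hEinf, encard_empty, encard_empty]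

end Truncations

section Extension

variable {α β : Type u} [PartialOrder α] [PartialOrder β]

theorem Iio_subset_setOf_not_isMax (x : α) : Iio x ⊆ {y | ¬IsMax y} :=
  fun _ => not_isMax_of_lt

/-- The fibres over each strict past have equal counts, hence are in bijection by countability. -/
theorem exists_equiv_isMax_Iio [Countable α] [Countable β]
    (e : {x : α | ¬IsMax x} ≃o {y : β | ¬IsMax y})
    (he : ∀ E ⊆ {x : α | ¬IsMax x}, (maxWithPast E).encard = (maxWithPast (e.mapSet E)).encard) :
    ∃ h : {m : α // IsMax m} ≃ {m : β // IsMax m}, ∀ m, Iio (h m : β) = e.mapSet (Iio (m : α)) := by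
  have hfibre : ∀ E : Set α, Nonempty ({m : {m : α // IsMax m} // Iio (m : α) = E} ≃
      {m : {m : β // IsMax m} // e.symm.mapSet (Iio (m : β)) = E}) := by
    intro E
    by_cases hE : E ⊆ {x | ¬IsMax x}
    · obtain ⟨χ⟩ := Set.nonempty_equiv_of_encard_eq (he E hE)
      refine ⟨(Equiv.subtypeSubtypeEquivSubtypeInter IsMax fun m : α => Iio m = E).trans <|
        χ.trans <| (Equiv.subtypeEquivRight fun m => and_congr_right fun _ => ?_).trans
          (Equiv.subtypeSubtypeEquivSubtypeInter IsMax fun m : β => e.symm.mapSet (Iio m) = E).symm⟩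
      exact ⟨fun h => h ▸ e.symm_mapSet_mapSet hE,
        fun h => h ▸ (e.symm.symm_mapSet_mapSet (Iio_subset_setOf_not_isMax m)).symm⟩
    · have : IsEmpty {m : {m : α // IsMax m} // Iio (m : α) = E} :=
        ⟨fun m => hE (m.2 ▸ Iio_subset_setOf_not_isMax _)⟩
      have : IsEmpty {m : {m : β // IsMax m} // e.symm.mapSet (Iio (m : β)) = E} :=
        ⟨fun m => hE (m.2 ▸ e.symm.mapSet_subset)⟩
      exact ⟨Equiv.equivOfIsEmpty _ _⟩
  refine ⟨Equiv.ofFiberEquiv fun E => (hfibre E).some, fun m => ?_⟩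
  rw [← Equiv.ofFiberEquiv_map (fun E => (hfibre E).some) m]
  exact (e.symm.symm_mapSet_mapSet (Iio_subset_setOf_not_isMax _)).symm

theorem nonempty_orderIso_of_nonmax [Countable α] [Countable β]
    (e : {x : α | ¬IsMax x} ≃o {y : β | ¬IsMax y})
    (he : ∀ E ⊆ {x : α | ¬IsMax x}, (maxWithPast E).encard = (maxWithPast (e.mapSet E)).encard) :
    Nonempty (α ≃o β) := by
  classical
  obtain ⟨h, hh⟩ := exists_equiv_isMax_Iio e he
  let F : α ≃ β :=
    (Equiv.sumCompl IsMax).symm.trans ((h.sumCongr e.toEquiv).trans (Equiv.sumCompl IsMax))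
  have hFmax : ∀ x (hx : IsMax x), F x = h ⟨x, hx⟩ := fun x hx => by
    simp [F, Equiv.sumCompl_symm_apply_of_pos hx]
    rfl
  have hFnmax : ∀ x (hx : ¬IsMax x), F x = e ⟨x, hx⟩ := fun x hx => by
    simp [F, Equiv.sumCompl_symm_apply_of_neg hx]
    rfl
  refine ⟨F.toOrderIsoOfImageIio fun x => ?_⟩
  have hF : F '' Iio x = e.mapSet (Iio x) := by
    ext b
    constructor
    · rintro ⟨y, hy, rfl⟩
      exact ⟨⟨y, not_isMax_of_lt hy⟩, hy, (hFnmax y _).symm⟩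
    · rintro ⟨y, hy, rfl⟩
      exact ⟨y, hy, hFnmax y y.2⟩
  rw [hF]
  by_cases hx : IsMax x
  · rw [hFmax x hx, hh]
  · rw [hFnmax x hx]
    exact (e.Iio_apply isLowerSet_setOf_not_isMax ⟨x, hx⟩).symm

end Extension

section Rigidity

variable {α β : Type} [PartialOrder α] [PartialOrder β]

theorem encard_nonmaxBelow_le (hα : ∀ x : α, (Iic x).Finite)
    (hss : SameStems (α := α) (β := β) (· ≤ ·) (· ≤ ·)) (n : ℕ) :
    (nonmaxBelow α n).encard ≤ (nonmaxBelow β n).encard := by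
  refine ENat.forall_natCast_le_iff_le.1 fun k hk => ?_
  obtain ⟨S, hSA, hSk⟩ := exists_subset_encard_eq hk
  obtain ⟨W, hWfin, hW, hSW, hwit⟩ := exists_finite_isLowerSet_witnesses hα
    (finite_of_encard_eq_coe hSk) (fun _ hx => (hSA hx).1) finite_empty
  obtain ⟨t, ht, ⟨φ⟩⟩ := hss.exists_orderIso hWfin hW
  rw [← hSk, ← φ.encard_mapSet (subset_union_left.trans hSW)]
  exact encard_le_encard (mapSet_subset_nonmaxBelow φ hW ht hSA hwit)

/-- The stem embedded in `β` consists of the truncation, witnesses of its non-maximality, and up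
to `n` maximal elements over each past in `nonmaxBelow α n`; the latter stay maximal in `β`
because the image of the truncation already exhausts `nonmaxBelow β (n + 1)`. -/
theorem exists_orderIso_min_encard_le (hα : ∀ x : α, (Iic x).Finite)
    (hss : SameStems (α := α) (β := β) (· ≤ ·) (· ≤ ·)) (n : ℕ)
    (hA : (nonmaxBelow α (n + 1)).Finite)
    (hAB : (nonmaxBelow α (n + 1)).encard = (nonmaxBelow β (n + 1)).encard) :
    ∃ ψ : nonmaxBelow α (n + 1) ≃o nonmaxBelow β (n + 1), ∀ E ⊆ nonmaxBelow α n,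
      min (n : ℕ∞) (maxWithPast E).encard ≤ min (n : ℕ∞) (maxWithPast (ψ.mapSet E)).encard := by
  choose D hDsub hDcard using fun E : Set α =>
    exists_subset_encard_eq (min_le_right (n : ℕ∞) (maxWithPast E).encard)
  have hDfin : ∀ E, (D E).Finite := fun E =>
    finite_of_encard_le_coe ((hDcard E).trans_le (min_le_left _ _))
  obtain ⟨W, hWfin, hW, hAW, hwit⟩ := exists_finite_isLowerSet_witnesses hα hA (fun _ hx => hx.1)
    ((hA.subset (nonmaxBelow_mono n.le_succ)).finite_subsets.biUnion fun E _ => hDfin E)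
  obtain ⟨t, ht, ⟨φ⟩⟩ := hss.exists_orderIso hWfin hW
  obtain ⟨ψ, hψ⟩ := φ.exists_restrict_of_mapSet_subset (subset_union_left.trans hAW) hA
    (mapSet_subset_nonmaxBelow φ hW ht subset_rfl hwit) hAB.ge
  have hsurj : φ.mapSet (nonmaxBelow α (n + 1)) = nonmaxBelow β (n + 1) :=
    (hψ _ subset_rfl).symm.trans ψ.mapSet_self
  refine ⟨ψ, fun E hE => ?_⟩
  have hDmax : φ.mapSet (D E) ⊆ maxWithPast (ψ.mapSet E) := by
    rintro _ ⟨m, hmD, rfl⟩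
    obtain ⟨hmmax, hmIio⟩ := hDsub E hmD
    have hmn : height (m : α) < (n + 1 : ℕ) :=
      (height_le_coe_iff.2 fun y hy => (hE (show y ∈ E from hmIio ▸ hy)).2).trans_lt
        (by exact_mod_cast n.lt_succ_self)
    refine ⟨isMax_apply_of_subset_mapSet φ hW ht hsurj.ge hmmax hmn, ?_⟩
    rw [φ.Iio_apply ht, hmIio, hψ E (hE.trans (nonmaxBelow_mono n.le_succ))]
  have hDenc : (φ.mapSet (D E)).encard = min (n : ℕ∞) (maxWithPast E).encard := by
    rw [φ.encard_mapSet fun m hm => hAW (Or.inr (mem_biUnion hE hm)), hDcard]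
  exact hDenc ▸ le_min (hDenc ▸ min_le_left _ _) (encard_le_encard hDmax)

theorem exists_matchesMaximals (hα : ∀ x : α, (Iic x).Finite) (hβ : ∀ x : β, (Iic x).Finite)
    (hss : SameStems (α := α) (β := β) (· ≤ ·) (· ≤ ·)) (n : ℕ)
    (hA : (nonmaxBelow α (n + 1)).Finite)
    (hAB : (nonmaxBelow α (n + 1)).encard = (nonmaxBelow β (n + 1)).encard) :
    ∃ ψ : nonmaxBelow α (n + 1) ≃o nonmaxBelow β (n + 1), MatchesMaximals n ψ := by
  obtain ⟨ψ, hψ⟩ := exists_orderIso_min_encard_le hα hss n hA hAB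
  obtain ⟨ψ', hψ'⟩ := exists_orderIso_min_encard_le hβ hss.symm n
    (encard_lt_top_iff.1 (hAB ▸ hA.encard_lt_top)) hAB.symm
  set σ := fun E => ψ'.mapSet (ψ.mapSet E)
  have hmaps : MapsTo σ (𝒫 nonmaxBelow α n) (𝒫 nonmaxBelow α n) := fun E hE =>
    mapSet_nonmaxBelow_subset ψ' (mapSet_nonmaxBelow_subset ψ hE)
  have hinv : LeftInvOn (fun F => ψ.symm.mapSet (ψ'.symm.mapSet F)) σ (𝒫 nonmaxBelow α n) :=
    fun E hE => by
      simp only [σ]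
      rw [ψ'.symm_mapSet_mapSet ψ.mapSet_subset,
        ψ.symm_mapSet_mapSet (hE.trans (nonmaxBelow_mono n.le_succ))]
  -- `ψ'` after `ψ` permutes the relevant pasts without decreasing the capped counts
  have hσ := (hA.subset (nonmaxBelow_mono n.le_succ)).finite_subsets.apply_eq_of_le_apply hmaps
    hinv.injOn (c := fun E => min (n : ℕ∞) (maxWithPast E).encard)
    fun E hE => (hψ E hE).trans (hψ' _ (mapSet_nonmaxBelow_subset ψ hE))
  exact ⟨ψ, fun E hE => (hψ E hE).antisymm
    ((hψ' _ (mapSet_nonmaxBelow_subset ψ hE)).trans (hσ E hE).le)⟩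

theorem nonempty_orderIso_of_sameStems [Countable α] [Countable β]
    (hα : ∀ x : α, (Iic x).Finite) (hβ : ∀ x : β, (Iic x).Finite)
    (hss : SameStems (α := α) (β := β) (· ≤ ·) (· ≤ ·)) (hfin : ∀ n, (nonmaxBelow α n).Finite) :
    Nonempty (α ≃o β) := by
  have hcard : ∀ n, (nonmaxBelow α n).encard = (nonmaxBelow β n).encard := fun n =>
    (encard_nonmaxBelow_le hα hss n).antisymm (encard_nonmaxBelow_le hβ hss.symm n)
  have hfinβ : ∀ n, (nonmaxBelow β n).Finite := fun n =>
    encard_lt_top_iff.1 (hcard n ▸ (hfin n).encard_lt_top)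
  obtain ⟨Φ, hΦ, hcompat⟩ := exists_compatible_matchesMaximals hfin hfinβ fun n =>
    exists_matchesMaximals hα hβ hss n (hfin _) (hcard _)
  obtain ⟨e, he⟩ := exists_orderIso_nonmax hα hβ Φ hcompat
  exact nonempty_orderIso_of_nonmax e fun E hE => encard_maxWithPast_mapSet hα hβ hΦ he hE

end Rigidity

theorem isRogueRel_iff {α : Type} [PartialOrder α] [Countable α] (hα : ∀ x : α, (Iic x).Finite) :
    IsRogueRel (α := α) (· ≤ ·) ↔ ∃ k : ℕ, {x : α | height x = k ∧ ¬IsMax x}.Infinite := by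
  refine ⟨fun ⟨β, le', hpo', _, hβ, hiso, hss⟩ => ?_, fun h => ?_⟩
  · by_contra! hfin
    let _ : PartialOrder β := partialOrderOfRel hpo'
    exact hiso (orderIsoRel_iff.2 (nonempty_orderIso_of_sameStems hα hβ hss
      fun n => nonmaxBelow_finite fun k _ => hfin k))
  · obtain ⟨x₀, hx₀⟩ := exists_infinite_nonmaxTwins h
    rcases (twinnedMaximals α).eq_empty_or_nonempty with hM | hM
    · exact isRogueRel_of_twinnedMaximals_eq_empty hα hM hx₀
    · exact isRogueRel_of_twinnedMaximals_nonempty hα hM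

end Causet

/-- **Θ = Γ**: A countable past-finite partial order is rogue if and only if it has a
level containing infinitely many non-maximal elements. -/
theorem rogue_iff_infinite_nonmaximal_level (α : Type) (le : α → α → Prop)
    (hpo : IsPartialOrder α le) (hc : Countable α) (hpf : PastFinite le) :
    IsRogueRel le ↔ ∃ k : ℕ, {x : α | HasLevel le x k ∧ ¬ IsMaximalRel le x}.Infinite := by
  have h := @Causet.isRogueRel_iff α (Causet.partialOrderOfRel hpo) hc hpf
  simp only [← Causet.hasLevel_iff, ← Causet.isMaximalRel_iff] at h
  exact h
end

section
/- Let μ be a probability measure on Ω̃ (with its Borel σ-algebra) that assigns measure zero to the set Θ̃ of all r ∈ Ω̃ whose poset (ℕ, r) is rogue. Then for every Borel subset A of Ω̃ that is invariant under order-isomorphism, there exists a set B in the σ-algebra generated by the stem sets such that μ(A Δ B) = 0. (Main Theorem / Corollary 1: the stem sets generate the covariant σ-algebra up to sets of measure zero.) -/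
/-- Ω̃: the completed labeled causets, modelled as the transitive natural relations on ℕ,
viewed as a subset of the product space `(ℕ × ℕ) → Bool`. -/
def OmegaT : Set ((ℕ × ℕ) → Bool) :=
  {r | (∀ x y z : ℕ, r (x, y) = true → r (y, z) = true → r (x, z) = true) ∧
       (∀ x y : ℕ, r (x, y) = true → x < y)}

/-- The partial order `≤` on ℕ determined by `r ∈ Ω̃` (the reflexive closure of `r`). -/
def leOf (r : OmegaT) (x y : ℕ) : Prop := x = y ∨ (r : (ℕ × ℕ) → Bool) (x, y) = true

/-- The stem set of a finite poset `s` on `Fin n`: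
`stem(s) = {r ∈ Ω̃ : s is a stem in the poset (ℕ, r)}`. -/
def stemSet (n : ℕ) (s : Fin n → Fin n → Prop) : Set OmegaT :=
  {r | IsStemIn s (leOf r)}

/-- The family of all stem sets (where `s` ranges over finite partial orders). -/
def stemFamily : Set (Set OmegaT) :=
  {S | ∃ (n : ℕ) (s : Fin n → Fin n → Prop), IsPartialOrder (Fin n) s ∧ S = stemSet n s}

/-- The cylinder set of a relation `s` on `{0,…,n-1}`: the relations in Ω̃ whose
restriction to `{0,…,n-1}` equals `s`. -/
def cyl (n : ℕ) (s : Fin n → Fin n → Bool) : Set OmegaT :=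
  {r | ∀ i j : Fin n, (r : (ℕ × ℕ) → Bool) ((i : ℕ), (j : ℕ)) = s i j}

/-- `s` is a transitive natural relation on `{0,…,n-1}`. -/
def IsFinCauset (n : ℕ) (s : Fin n → Fin n → Bool) : Prop :=
  (∀ i j k : Fin n, s i j = true → s j k = true → s i k = true) ∧
  (∀ i j : Fin n, s i j = true → (i : ℕ) < (j : ℕ))

/-- The family of all cylinder sets. -/
def cylFamily : Set (Set OmegaT) :=
  {C | ∃ (n : ℕ) (s : Fin n → Fin n → Bool), IsFinCauset n s ∧ C = cyl n s}

/-- A subset of Ω̃ is invariant under order-isomorphism (i.e. covariant). -/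
def IsoInvariant (A : Set OmegaT) : Prop :=
  ∀ r₁ r₂ : OmegaT, OrderIsoRel (leOf r₁) (leOf r₂) → r₁ ∈ A → r₂ ∈ A

/-- Θ̃: the set of `r ∈ Ω̃` whose poset `(ℕ, r)` is rogue. -/
def ThetaT : Set OmegaT := {r | IsRogueRel (leOf r)}

/-!
Send `r` to its stem profile `Φ r`, the list of finite posets that are stems in `(ℕ, r)`. The
map `Φ` is Borel, and it is also measurable for the σ-algebra generated by the stem sets. Let `T`
be a Borel null set containing `Θ̃`. Outside `T`, two causets with the same profile are
isomorphic. So for an invariant Borel set `A`, the sets `Φ '' (A \ T)` and `Φ '' (Aᶜ \ T)` are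
disjoint analytic subsets of Cantor space. Lusin's separation theorem gives a Borel set `u`
between them, and `B = Φ ⁻¹' u` differs from `A` only inside `T`.
-/

open MeasureTheory Set

theorem MeasurableSet.exists_measurableSet_measure_symmDiff_preimage_eq_zero
    {X Y : Type*} [MeasurableSpace X] [StandardBorelSpace X] [TopologicalSpace Y] [T2Space Y]
    [SecondCountableTopology Y] [MeasurableSpace Y] [OpensMeasurableSpace Y]
    {μ : Measure X} {Φ : X → Y} {A N : Set X} (hA : MeasurableSet A) (hΦ : Measurable Φ)
    (hN : μ N = 0) (hA_sat : ∀ x ∈ A, ∀ y, x ∉ N → y ∉ N → Φ x = Φ y → y ∈ A) :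
    ∃ u, MeasurableSet u ∧ μ (symmDiff A (Φ ⁻¹' u)) = 0 := by
  set T := toMeasurable μ N
  have hT : MeasurableSet T := measurableSet_toMeasurable μ N
  have hNT : ∀ {x}, x ∉ T → x ∉ N := fun hx h => hx (subset_toMeasurable μ N h)
  have hdisj : Disjoint (Φ '' (A \ T)) (Φ '' (Aᶜ \ T)) := by
    rw [disjoint_left]
    rintro _ ⟨x, ⟨hxA, hxT⟩, rfl⟩ ⟨y, ⟨hyA, hyT⟩, hxy⟩
    exact hyA (hA_sat x hxA y (hNT hxT) (hNT hyT) hxy.symm)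
  obtain ⟨u, hAu, hAcu, hu⟩ := ((hA.diff hT).analyticSet_image hΦ).measurablySeparable
    ((hA.compl.diff hT).analyticSet_image hΦ) hdisj
  refine ⟨u, hu, measure_mono_null ?_ ((measure_toMeasurable N).trans hN)⟩
  rintro x (⟨hxA, hxu⟩ | ⟨hxu, hxA⟩) <;> by_contra hxT
  · exact hxu (hAu ⟨x, ⟨hxA, hxT⟩, rfl⟩)
  · exact disjoint_left.1 hAcu ⟨x, ⟨hxA, hxT⟩, rfl⟩ hxu

lemma leOf_le (r : OmegaT) {x y : ℕ} (h : leOf r x y) : x ≤ y := by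
  rcases h with rfl | h
  · exact le_rfl
  · exact (r.2.2 x y h).le

instance (r : OmegaT) : IsPartialOrder ℕ (leOf r) where
  refl _ := Or.inl rfl
  trans _ _ _ := by
    rintro (rfl | hxy) (rfl | hyz)
    exacts [Or.inl rfl, Or.inr hyz, Or.inr hxy, Or.inr (r.2.1 _ _ _ hxy hyz)]
  antisymm _ _ hxy hyx := le_antisymm (leOf_le r hxy) (leOf_le r hyx)

lemma pastFinite_leOf (r : OmegaT) : PastFinite (leOf r) :=
  fun x => (finite_Iic x).subset fun _ => leOf_le r

lemma orderIsoRel_of_sameStems {r₁ r₂ : OmegaT} (h : r₁ ∉ ThetaT)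
    (hs : SameStems (leOf r₁) (leOf r₂)) : OrderIsoRel (leOf r₁) (leOf r₂) := by
  by_contra hni
  exact h ⟨ℕ, leOf r₂, inferInstance, inferInstance, pastFinite_leOf r₂, hni, hs⟩

lemma isPartialOrder_of_isStemIn {α : Type} {le : α → α → Prop} [IsPartialOrder α le] {n : ℕ}
    {s : Fin n → Fin n → Prop} (h : IsStemIn s le) : IsPartialOrder (Fin n) s := by
  obtain ⟨f, hf, hs, -⟩ := h
  exact (⟨⟨f, hf⟩, (hs _ _).symm⟩ : s ↪r le).isPartialOrder

lemma isClosed_omegaT : IsClosed OmegaT := by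
  have hclopen (p : ℕ × ℕ) : IsClopen {r : (ℕ × ℕ) → Bool | r p = true} :=
    (isClopen_discrete {true}).preimage (continuous_apply p)
  simp only [OmegaT, ofPred_and, ofPred_forall]
  exact (isClosed_iInter fun x => isClosed_iInter fun y => isClosed_iInter fun z =>
      isClosed_imp (hclopen _).isOpen (isClosed_imp (hclopen _).isOpen (hclopen _).isClosed)).inter
    (isClosed_iInter fun x => isClosed_iInter fun y =>
      isClosed_imp (hclopen _).isOpen isClosed_const)

instance : PolishSpace OmegaT :=
  have : PolishSpace ((ℕ × ℕ) → Bool) := {}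
  isClosed_omegaT.polishSpace

/-- Indexed by all relations on each `Fin n`, not only partial orders, so that equal profiles
give `SameStems` at once; a relation that is not a partial order has an empty stem set. -/
noncomputable def stemProfile (r : OmegaT) (k : Σ n : ℕ, Fin n → Fin n → Prop) : Bool :=
  open scoped Classical in decide (r ∈ stemSet k.1 k.2)

lemma sameStems_of_stemProfile_eq {r₁ r₂ : OmegaT} (h : stemProfile r₁ = stemProfile r₂) :
    SameStems (leOf r₁) (leOf r₂) := fun n s =>
  decide_eq_decide.1 (congrFun h ⟨n, s⟩)

lemma measurable_stemProfile_of_measurableSet_stemSet {m : MeasurableSpace OmegaT}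
    (h : ∀ n s, MeasurableSet (stemSet n s)) : Measurable stemProfile :=
  measurable_pi_iff.2 fun k => measurable_to_bool <| by
    convert h k.1 k.2
    ext r
    simp [stemProfile]

lemma measurableSet_generateFrom_stemSet (n : ℕ) (s : Fin n → Fin n → Prop) :
    MeasurableSet[MeasurableSpace.generateFrom stemFamily] (stemSet n s) := by
  by_cases hs : IsPartialOrder (Fin n) s
  · exact MeasurableSpace.measurableSet_generateFrom ⟨n, s, hs, rfl⟩
  · convert MeasurableSet.empty
    exact eq_empty_of_forall_notMem fun r hr => hs (isPartialOrder_of_isStemIn hr)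

section Borel

variable [MeasurableSpace OmegaT] [OpensMeasurableSpace OmegaT]

lemma measurable_leOf (x y : ℕ) : Measurable fun r : OmegaT => leOf r x y := by
  have hcoord : Continuous fun r : OmegaT => r.1 (x, y) :=
    (continuous_apply _).comp continuous_subtype_val
  exact measurable_const.or (hcoord.measurable.eq_const true)

lemma measurableSet_stemSet (n : ℕ) (s : Fin n → Fin n → Prop) : MeasurableSet (stemSet n s) :=
  measurableSet_setOfPred.2 <| Measurable.exists fun _ => measurable_const.and <|
    (Measurable.forall fun _ => Measurable.forall fun _ =>
      measurable_const.iff (measurable_leOf _ _)).and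
    (Measurable.forall fun _ => Measurable.forall fun _ =>
      (measurable_leOf _ _).imp measurable_const)

end Borel

open MeasureTheory in
theorem stem_sets_generate_up_to_measure_zero_general
    (μ : @Measure OmegaT (borel OmegaT))
    (hTheta : μ ThetaT = 0) :
    ∀ A : Set OmegaT, MeasurableSet[borel OmegaT] A → IsoInvariant A →
      ∃ B : Set OmegaT, MeasurableSet[MeasurableSpace.generateFrom stemFamily] B ∧
        μ (symmDiff A B) = 0 := by
  intro A hA hA_inv
  let : MeasurableSpace OmegaT := borel OmegaT
  have : BorelSpace OmegaT := ⟨rfl⟩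
  obtain ⟨u, hu, hAu⟩ := hA.exists_measurableSet_measure_symmDiff_preimage_eq_zero
    (measurable_stemProfile_of_measurableSet_stemSet measurableSet_stemSet) hTheta
    fun r₁ hr₁ r₂ hr₁_θ _ h =>
      hA_inv r₁ r₂ (orderIsoRel_of_sameStems hr₁_θ (sameStems_of_stemProfile_eq h)) hr₁
  exact ⟨_, measurable_stemProfile_of_measurableSet_stemSet
    measurableSet_generateFrom_stemSet hu, hAu⟩

open MeasureTheory in
/-- **Main Theorem**: if `μ` is a probability measure on Ω̃ (with its Borel σ-algebra)
with `μ(Θ̃) = 0`, then for every isomorphism-invariant Borel set `A` there is a set `B`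
in the σ-algebra generated by the stem sets with `μ(A Δ B) = 0`. -/
theorem stem_sets_generate_up_to_measure_zero
    (μ : @Measure OmegaT (borel OmegaT))
    (hprob : @IsProbabilityMeasure OmegaT (borel OmegaT) μ)
    (hTheta : μ ThetaT = 0) :
    ∀ A : Set OmegaT, MeasurableSet[borel OmegaT] A → IsoInvariant A →
      ∃ B : Set OmegaT, MeasurableSet[MeasurableSpace.generateFrom stemFamily] B ∧
        μ (symmDiff A B) = 0 :=
  stem_sets_generate_up_to_measure_zero_general μ hTheta
end
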